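/- arXiv:1003.3160 — 6 statements merged into one kernel-verified Lean document; each statement's English description precedes it below -/
import Mathlib

section
/- Let t be an odd prime, ζ a primitive t-th root of unity, and let l be a prime number different from t such that the class of -1 in (ℤ/tℤ)ˣ lies in the cyclic subgroup generated by the class of l. Then every prime ideal of ℤ[ζ] lying above l is stable under complex conjugation, i.e., if 𝔩 is a prime ideal of ℤ[ζ] with l ∈ 𝔩 and j denotes the complex conjugation automorphism of ℚ(ζ), then j(𝔩) = 𝔩. -/
/-!
Writing `-1 ≡ l ^ k (mod t)`, conjugation sends `ζ` to `ζ ^ l ^ k`. As `𝓞 ℚ(ζ) = ℤ[ζ]` and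
`𝓞 ℚ(ζ) ⧸ 𝔩` has characteristic `l`, it follows that `j x ≡ x ^ l ^ k (mod 𝔩)` for every
integer `x`, so `j` maps `𝔩` into `𝔩`; maximality of `𝔩` forces equality.
-/

open NumberField

theorem IsPrimitiveRoot.pow_eq_inv_of_natCast_eq_neg_one {M : Type*} [DivisionCommMonoid M]
    {ζ : M} {n m : ℕ} (hζ : IsPrimitiveRoot ζ n) (hm : (m : ZMod n) = -1) : ζ ^ m = ζ⁻¹ := by
  refine eq_inv_of_mul_eq_one_left ?_
  rw [← pow_succ, hζ.pow_eq_one_iff_dvd, ← ZMod.natCast_eq_zero_iff]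
  push_cast
  rw [hm, neg_add_cancel]

theorem Ideal.le_comap_of_apply_eq_pow_of_adjoin_eq_top {A : Type*} [CommRing A] {P : Ideal A}
    (hP : P ≠ ⊤) {p : ℕ} [Fact p.Prime] (hp : (p : A) ∈ P) {x : A}
    (hx : Algebra.adjoin ℤ {x} = ⊤) {σ : A →+* A} {k : ℕ} (hσ : σ x = x ^ p ^ k) :
    P ≤ P.comap σ := by
  have : Nontrivial (A ⧸ P) := Ideal.Quotient.nontrivial_iff.2 hP
  have : CharP (A ⧸ P) p := (CharP.charP_iff_prime_eq_zero Fact.out).2 <| by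
    rw [← map_natCast (Ideal.Quotient.mk P)]
    exact Ideal.Quotient.eq_zero_iff_mem.2 hp
  have hfrob : (Ideal.Quotient.mk P).comp σ =
      (iterateFrobenius (A ⧸ P) p k).comp (Ideal.Quotient.mk P) :=
    congrArg AlgHom.toRingHom <| AlgHom.ext_of_adjoin_eq_top hx
      (φ₁ := ((Ideal.Quotient.mk P).comp σ).toIntAlgHom)
      (φ₂ := ((iterateFrobenius (A ⧸ P) p k).comp (Ideal.Quotient.mk P)).toIntAlgHom)
      (by simp [hσ, iterateFrobenius_def])
  intro y hy
  rw [Ideal.mem_comap, ← Ideal.Quotient.eq_zero_iff_mem, ← RingHom.comp_apply, hfrob,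
    RingHom.comp_apply, Ideal.Quotient.eq_zero_iff_mem.2 hy, map_zero]

theorem Ideal.map_eq_self_of_le_comap {A : Type*} [CommRing A] {P : Ideal A} (hP : P.IsMaximal)
    {σ : A →+* A} (hσ : Function.Surjective σ) (h : P ≤ P.comap σ) : P.map σ = P := by
  have heq : P.comap σ = P := (hP.eq_of_le (Ideal.comap_ne_top σ hP.ne_top) h).symm
  calc P.map σ = (P.comap σ).map σ := by rw [heq]
    _ = P := Ideal.map_comap_of_surjective σ hσ P

theorem stmt_6_general (t : ℕ+)
    (ζ : CyclotomicField t ℚ) (hζ : IsPrimitiveRoot ζ (t : ℕ))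
    (l : ℕ) (hl : l.Prime)
    (hl1 : (-1 : ZMod t) ∈ Submonoid.powers ((l : ℕ) : ZMod t))
    (j : CyclotomicField t ℚ ≃ₐ[ℚ] CyclotomicField t ℚ) (hj : j ζ = ζ⁻¹)
    (𝔩 : Ideal (𝓞 (CyclotomicField t ℚ))) (h𝔩 : 𝔩.IsPrime)
    (hl𝔩 : (l : 𝓞 (CyclotomicField t ℚ)) ∈ 𝔩) :
    Ideal.map (RingOfIntegers.mapRingHom j) 𝔩 = 𝔩 := by
  have : Fact l.Prime := ⟨hl⟩
  have : IsCyclotomicExtension {(t : ℕ)} ℚ (CyclotomicField t ℚ) :=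
    CyclotomicField.isCyclotomicExtension (t : ℕ) ℚ
  obtain ⟨k, hk⟩ := hl1
  have hjζ : RingOfIntegers.mapRingHom (j : _ →+* _) hζ.toInteger = hζ.toInteger ^ l ^ k := by
    ext
    push_cast [RingOfIntegers.mapRingHom_apply]
    change j ζ = ζ ^ l ^ k
    rw [hj, hζ.pow_eq_inv_of_natCast_eq_neg_one (by push_cast; exact hk)]
  have h𝔩max : 𝔩.IsMaximal := h𝔩.isMaximal <| by
    rintro rfl
    exact hl.ne_zero (by simpa using hl𝔩)
  exact Ideal.map_eq_self_of_le_comap h𝔩max (RingOfIntegers.mapRingEquiv j.toRingEquiv).surjective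
    (Ideal.le_comap_of_apply_eq_pow_of_adjoin_eq_top h𝔩.ne_top hl𝔩
      (hζ.integralPowerBasis_gen ▸ hζ.integralPowerBasis.adjoin_gen_eq_top) hjζ)

/-- Let `t` be an odd prime, `ζ` a primitive `t`-th root of unity in the
`t`-th cyclotomic field `ℚ(ζ_t)`, and `l ≠ t` a prime such that the class of `-1` in
`(ℤ/tℤ)ˣ` lies in the cyclic subgroup generated by the class of `l`.  If `j` is the
complex conjugation automorphism of `ℚ(ζ_t)` (the `ℚ`-algebra automorphism sending `ζ` to
`ζ⁻¹`) and `𝔩` is a prime ideal of the ring of integers `ℤ[ζ]` with `l ∈ 𝔩`, then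
`j(𝔩) = 𝔩`. -/
theorem stmt_6 (t : ℕ+) (ht : (t : ℕ).Prime) (hodd : Odd (t : ℕ))
    (ζ : CyclotomicField t ℚ) (hζ : IsPrimitiveRoot ζ (t : ℕ))
    (l : ℕ) (hl : l.Prime) (hlt : l ≠ (t : ℕ))
    (hl1 : (-1 : ZMod t) ∈ Submonoid.powers ((l : ℕ) : ZMod t))
    (j : CyclotomicField t ℚ ≃ₐ[ℚ] CyclotomicField t ℚ) (hj : j ζ = ζ⁻¹)
    (𝔩 : Ideal (𝓞 (CyclotomicField t ℚ))) (h𝔩 : 𝔩.IsPrime)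
    (hl𝔩 : (l : 𝓞 (CyclotomicField t ℚ)) ∈ 𝔩) :
    Ideal.map (RingOfIntegers.mapRingHom j) 𝔩 = 𝔩 :=
  stmt_6_general t ζ hζ l hl hl1 j hj 𝔩 h𝔩 hl𝔩
end

section
/- Let t > 3 be a prime, ζ a primitive t-th root of unity, and let B be a nonzero rational integer coprime to t such that for every prime number l dividing B, the class of -1 in (ℤ/tℤ)ˣ lies in the cyclic subgroup generated by the class of l. Then for all coprime elements a, b of ℤ[ζ+ζ̄] with a + b ≠ 0, the rational integer B is coprime in ℤ[ζ] to the algebraic integer (a^t + b^t)/(a + b); that is, no prime ideal of ℤ[ζ] divides both B and (a^t + b^t)/(a + b). -/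
/-!
If a prime `P` of `ℤ[ζ]` contained `B` and `c`, its residue ring would have characteristic a
prime `l ∣ B`, and some `q = l ^ k` is `≡ -1 mod t`. The Frobenius `x ↦ x ^ q` then sends the
image of `ζ` to that of `ζ⁻¹`, so it fixes the image of `ℤ[ζ + ζ̄]`, in particular `x = a mod P`
and `y = -b mod P`. From `c ∈ P` we get `x ^ t = y ^ t`, and `t ∣ q + 1` turns this into
`x ^ 2 = y ^ 2`; as `t` is odd, `x = y`. But then `c ≡ t x ^ (t - 1) mod P` with `t ∉ P`
(because `B ∈ P`), so `a` and `b` both lie in `P`, contradicting their coprimality.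
-/

open Finset NumberField

theorem eq_of_sq_eq_sq_of_pow_eq_pow {R : Type*} [CommRing R] [IsDomain R] {t : ℕ} (ht : Odd t)
    {x z : R} (h2 : x ^ 2 = z ^ 2) (h : x ^ t = z ^ t) : x = z := by
  rcases sq_eq_sq_iff_eq_or_eq_neg.mp h2 with hxz | rfl
  · exact hxz
  rw [ht.neg_pow, neg_eq_iff_add_eq_zero, ← two_mul] at h
  rcases mul_eq_zero.mp h with htwo | hz
  · rw [neg_eq_iff_add_eq_zero, ← two_mul, htwo, zero_mul]
  · rw [pow_eq_zero_iff ht.pos.ne' |>.mp hz, neg_zero]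

theorem eq_of_pow_eq_pow_of_pow_eq_self {R : Type*} [CommRing R] [IsDomain R] {t q : ℕ}
    (ht : Odd t) (hq : t ∣ q + 1) {x z : R} (hx : x ^ q = x) (hz : z ^ q = z)
    (h : x ^ t = z ^ t) : x = z := by
  obtain ⟨m, hm⟩ := hq
  refine eq_of_sq_eq_sq_of_pow_eq_pow ht ?_ h
  calc x ^ 2 = x ^ (q + 1) := by rw [pow_succ x q, hx, sq]
    _ = z ^ (q + 1) := by rw [hm, pow_mul, pow_mul, h]
    _ = z ^ 2 := by rw [pow_succ z q, hz, sq]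

theorem pow_eq_of_pow_eq_one_of_mul_eq_one {M : Type*} [CommMonoid M] {t q : ℕ} (hq : t ∣ q + 1)
    {u v : M} (hu : u ^ t = 1) (huv : u * v = 1) : u ^ q = v := by
  obtain ⟨m, hm⟩ := hq
  calc u ^ q = u ^ (q + 1) * v := by rw [pow_succ, mul_assoc, huv, mul_one]
    _ = v := by rw [hm, pow_mul, hu, one_pow, one_mul]

theorem pow_expChar_pow_map_eq_self_of_mem_adjoin {A F : Type*} [CommRing A] [CommRing F]
    {p : ℕ} [ExpChar F p] (k : ℕ) (f : A →+* F) {s : Set A}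
    (hs : ∀ x ∈ s, f x ^ p ^ k = f x) {x : A} (hx : x ∈ Algebra.adjoin ℤ s) :
    f x ^ p ^ k = f x := by
  rw [Algebra.adjoin_int] at hx
  exact (Subring.closure_le (t := ((iterateFrobenius F p k).comp f).eqLocus f)).2 hs hx

theorem pow_expChar_pow_map_eq_self_of_mem_adjoin_add {A F : Type*} [CommRing A] [CommRing F]
    {p t k : ℕ} [ExpChar F p] (hq : t ∣ p ^ k + 1) (f : A →+* F) {ζ ζbar : A} (hζ : ζ ^ t = 1)
    (hζζbar : ζ * ζbar = 1) {x : A} (hx : x ∈ Algebra.adjoin ℤ {ζ + ζbar}) :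
    f x ^ p ^ k = f x := by
  have hζbar : ζbar ^ t = 1 := by simpa [mul_pow, hζ] using congrArg (· ^ t) hζζbar
  refine pow_expChar_pow_map_eq_self_of_mem_adjoin k f ?_ hx
  rintro _ rfl
  rw [map_add, add_pow_expChar_pow, ← map_pow, ← map_pow,
    pow_eq_of_pow_eq_one_of_mul_eq_one hq hζ hζζbar,
    pow_eq_of_pow_eq_one_of_mul_eq_one hq hζbar (by rw [mul_comm, hζζbar]), add_comm]

theorem ringChar_prime_and_dvd_of_intCast_eq_zero {R : Type*} [CommRing R] [IsDomain R] {B : ℤ}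
    (hB : B ≠ 0) (hBR : (B : R) = 0) : (ringChar R).Prime ∧ (ringChar R : ℤ) ∣ B := by
  have hdvd : (ringChar R : ℤ) ∣ B := (CharP.intCast_eq_zero_iff R _ B).mp hBR
  refine ⟨(CharP.char_is_prime_or_zero R _).resolve_right fun h0 => hB ?_, hdvd⟩
  rwa [h0, Nat.cast_zero, zero_dvd_iff] at hdvd

theorem eq_geom_sum₂_of_add_mul_eq_pow_add_pow {R : Type*} [CommRing R] [IsDomain R] {t : ℕ}
    (ht : Odd t) {a b c : R} (hab : a + b ≠ 0) (hc : (a + b) * c = a ^ t + b ^ t) :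
    c = ∑ i ∈ range t, a ^ i * (-b) ^ (t - 1 - i) := by
  apply mul_left_cancel₀ hab
  rw [hc, mul_comm, ← sub_neg_eq_add a b, geom_sum₂_mul, ht.neg_pow, sub_neg_eq_add]

theorem map_eq_natCast_mul_pow_of_map_eq_neg {R S : Type*} [CommRing R] [IsDomain R]
    [CommRing S] (f : R →+* S) {t : ℕ} (ht : Odd t) {a b c : R} (hab : a + b ≠ 0)
    (hc : (a + b) * c = a ^ t + b ^ t) (hfab : f a = -f b) : f c = t * f a ^ (t - 1) := by
  rw [eq_geom_sum₂_of_add_mul_eq_pow_add_pow ht hab hc, RingHom.map_geom_sum₂, map_neg, ← hfab,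
    geom_sum₂_self]

/-- Let `t > 3` be a prime, `ζ ∈ ℤ[ζ]` (the ring of integers of
`ℚ(ζ_t)`) a primitive `t`-th root of unity, `ζbar = ζ⁻¹`, and `B` a nonzero integer
coprime to `t` such that for every prime `l` dividing `B` the class of `-1` in
`(ℤ/tℤ)ˣ` lies in the subgroup generated by the class of `l`.  Then for all coprime
`a, b ∈ ℤ[ζ+ζbar]` with `a + b ≠ 0`, the integer `B` is coprime in `ℤ[ζ]` to the
algebraic integer `c = (a^t + b^t)/(a + b)`: no prime ideal of `ℤ[ζ]` contains both `B`
and `c`. -/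
theorem stmt_7 (t : ℕ+) (ht : (t : ℕ).Prime) (ht3 : 3 < (t : ℕ))
    (ζ ζbar : 𝓞 (CyclotomicField t ℚ)) (hζ : IsPrimitiveRoot ζ (t : ℕ))
    (hζbar : ζ * ζbar = 1)
    (B : ℤ) (hB : B ≠ 0) (hBt : IsCoprime B ((t : ℕ) : ℤ))
    (hBl : ∀ l : ℕ, l.Prime → (l : ℤ) ∣ B →
      (-1 : ZMod t) ∈ Submonoid.powers ((l : ℕ) : ZMod t))
    (a b : Algebra.adjoin ℤ ({ζ + ζbar} : Set (𝓞 (CyclotomicField t ℚ))))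
    (hab : IsCoprime a b) (hab0 : a + b ≠ 0)
    (c : 𝓞 (CyclotomicField t ℚ))
    (hc : ((a : 𝓞 (CyclotomicField t ℚ)) + (b : 𝓞 (CyclotomicField t ℚ))) * c =
      (a : 𝓞 (CyclotomicField t ℚ)) ^ (t : ℕ) + (b : 𝓞 (CyclotomicField t ℚ)) ^ (t : ℕ)) :
    ∀ P : Ideal (𝓞 (CyclotomicField t ℚ)), P.IsPrime →
      ¬ ((B : 𝓞 (CyclotomicField t ℚ)) ∈ P ∧ c ∈ P) := by
  rintro P hP ⟨hBP, hcP⟩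
  set f := Ideal.Quotient.mk P
  have hfc : f c = 0 := Ideal.Quotient.eq_zero_iff_mem.mpr hcP
  have htodd : Odd (t : ℕ) := ht.odd_of_ne_two (by omega)
  have hBF : (B : 𝓞 (CyclotomicField t ℚ) ⧸ P) = 0 := by
    rw [← map_intCast f, Ideal.Quotient.eq_zero_iff_mem]; exact hBP
  have htF : ((t : ℕ) : 𝓞 (CyclotomicField t ℚ) ⧸ P) ≠ 0 := by
    have hcop := hBt.map (Int.castRingHom (𝓞 (CyclotomicField t ℚ) ⧸ P))
    simp only [eq_intCast, hBF, Int.cast_natCast, isCoprime_zero_left] at hcop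
    exact hcop.ne_zero
  obtain ⟨hl, hlB⟩ := ringChar_prime_and_dvd_of_intCast_eq_zero hB hBF
  set l := ringChar (𝓞 (CyclotomicField t ℚ) ⧸ P)
  have : Fact l.Prime := ⟨hl⟩
  obtain ⟨k, hk : ((l : ℕ) : ZMod t) ^ k = -1⟩ := hBl l hl hlB
  have hq : (t : ℕ) ∣ l ^ k + 1 := by
    rw [← ZMod.natCast_eq_zero_iff]
    push_cast
    rw [hk, neg_add_cancel]
  have hfix {x} (hx : x ∈ Algebra.adjoin ℤ {ζ + ζbar}) : f x ^ l ^ k = f x :=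
    pow_expChar_pow_map_eq_self_of_mem_adjoin_add hq f hζ.pow_eq_one hζbar hx
  have hfab : f a = -f b := by
    refine eq_of_pow_eq_pow_of_pow_eq_self htodd hq (hfix a.2) ?_ ?_
    · rw [← map_neg]; exact hfix (neg_mem b.2)
    · have hsum := congrArg f hc
      rw [map_mul, hfc, mul_zero, map_add, map_pow,
        map_pow, eq_comm, add_eq_zero_iff_eq_neg] at hsum
      rw [hsum, htodd.neg_pow]
  have hab0' : (a : 𝓞 (CyclotomicField t ℚ)) + b ≠ 0 := by exact_mod_cast hab0
  have hfa : f a = 0 := by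
    have hcF := map_eq_natCast_mul_pow_of_map_eq_neg f htodd hab0' hc hfab
    rw [hfc, eq_comm] at hcF
    exact pow_eq_zero_iff (by omega) |>.mp ((mul_eq_zero.mp hcF).resolve_left htF)
  have hfb : f b = 0 := by rwa [hfa, eq_comm, neg_eq_zero] at hfab
  have hcopF := hab.map (f.comp (Algebra.adjoin ℤ _).val.toRingHom)
  exact not_isCoprime_zero_zero (by simpa [hfa, hfb] using hcopF)
end

section
/- Let t > 3 be a prime, ζ a primitive t-th root of unity, λ = (1-ζ)(1-ζ̄), and for each integer a not divisible by t set λ_a = (1-ζ^a)(1-ζ^{-a}). Then for integers a, b ∈ {1, …, t-1} with b ≢ a (mod t) and b ≢ -a (mod t), the element λ·(λ_a⁻¹ - λ_b⁻¹) is a unit of the ring ℤ[ζ+ζ̄]. -/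
/-!
Since `t` is odd, `ζ = ω²` for the primitive root `ω = ζ^((t+1)/2)`. Put `s n = ω^n - ω^(-n)`.
Then `λ_n = -(s n)²` and `s(a)² - s(b)² = s(a+b) s(a-b)`, so
`λ(λ_a⁻¹ - λ_b⁻¹) = -(s 1/s a)(s 1/s b)(s(a+b)/s a)(s(a-b)/s b)`.
For `t ∤ m, n` write `ω^m = u^k` with `u = ω^n`; then `s m / s n = (u^k - u^(-k))/(u - u⁻¹)` is a
polynomial in `u + u⁻¹`, hence lies in `ℤ[ω + ω⁻¹] ⊆ ℤ[ζ + ζ⁻¹]`, and so does its inverse.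
-/

open Polynomial

section SymmetricPowers

variable {R : Type*} [CommRing R] {S : Subalgebra ℤ R} {x y : R}

theorem pow_add_pow_mem_of_mul_eq_one (hxy : x * y = 1) (hS : x + y ∈ S) (n : ℕ) :
    x ^ n + y ^ n ∈ S := by
  rw [← dickson_one_one_eval_add_inv x y hxy n, ← map_one (algebraMap ℤ R), ← map_dickson,
    eval_map_algebraMap]
  exact Algebra.adjoin_le (Set.singleton_subset_iff.mpr hS) (aeval_mem_adjoin_singleton ℤ _)

theorem exists_pow_sub_pow_eq_mul_of_mul_eq_one (hxy : x * y = 1) (hS : x + y ∈ S) (n : ℕ) :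
    ∃ e ∈ S, x ^ n - y ^ n = (x - y) * e := by
  induction n using Nat.twoStepInduction with
  | zero => exact ⟨0, zero_mem S, by simp⟩
  | one => exact ⟨1, one_mem S, by simp⟩
  | more n ih₀ ih₁ =>
    obtain ⟨e₀, he₀, h₀⟩ := ih₀
    obtain ⟨e₁, he₁, h₁⟩ := ih₁
    refine ⟨(x + y) * e₁ - e₀, sub_mem (mul_mem hS he₁) he₀, ?_⟩
    linear_combination (x + y) * h₁ - h₀ - (x ^ n - y ^ n) * hxy

end SymmetricPowers

section CyclotomicSine

variable {K : Type*} [Field K]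

-- For `ω = e^{iθ}` this is `2i sin(nθ)`.
def cyclotomicSine (ω : K) (n : ℤ) : K := ω ^ n - ω ^ (-n)

variable {ω : K}

theorem one_sub_zpow_mul_one_sub_zpow_neg (hω : ω ≠ 0) (n : ℤ) :
    (1 - (ω ^ 2) ^ n) * (1 - (ω ^ 2) ^ (-n)) = -cyclotomicSine ω n ^ 2 := by
  have hsq : (ω ^ 2) ^ n = (ω ^ n) ^ 2 := by
    rw [← zpow_natCast, ← zpow_mul, mul_comm, zpow_mul, zpow_natCast]
  have hn : ω ^ n ≠ 0 := zpow_ne_zero n hω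
  rw [cyclotomicSine, zpow_neg, zpow_neg, hsq]
  field_simp
  ring

theorem cyclotomicSine_sq_sub_sq (hω : ω ≠ 0) (a b : ℤ) :
    cyclotomicSine ω a ^ 2 - cyclotomicSine ω b ^ 2 =
      cyclotomicSine ω (a + b) * cyclotomicSine ω (a - b) := by
  simp only [cyclotomicSine, neg_add, neg_sub, zpow_add₀ hω, zpow_sub₀ hω, zpow_neg]
  field_simp
  ring

theorem IsPrimitiveRoot.cyclotomicSine_ne_zero {p : ℕ} (hω : IsPrimitiveRoot ω p) (hp : p ≠ 0)
    {n : ℤ} (hn : ¬ (p : ℤ) ∣ 2 * n) : cyclotomicSine ω n ≠ 0 := by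
  have hω0 : ω ≠ 0 := hω.ne_zero hp
  rw [cyclotomicSine, sub_ne_zero, Ne, ← div_eq_one_iff_eq (zpow_ne_zero _ hω0),
    ← zpow_sub₀ hω0, hω.zpow_eq_one_iff_dvd, sub_neg_eq_add, ← two_mul]
  exact hn

theorem IsPrimitiveRoot.cyclotomicSine_ne_zero_of_prime {p : ℕ} (hω : IsPrimitiveRoot ω p)
    (hp : p.Prime) (hp2 : p ≠ 2) {n : ℤ} (hn : ¬ (p : ℤ) ∣ n) : cyclotomicSine ω n ≠ 0 := by
  refine hω.cyclotomicSine_ne_zero hp.ne_zero fun h => ?_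
  rcases Int.Prime.dvd_mul' hp h with h2 | hn'
  · exact hp2 ((Nat.prime_dvd_prime_iff_eq hp Nat.prime_two).mp (by exact_mod_cast h2))
  · exact hn hn'

variable {S : Subalgebra ℤ K}

theorem zpow_add_zpow_neg_mem (hω : ω ≠ 0) (hS : ω + ω⁻¹ ∈ S) (n : ℤ) :
    ω ^ n + ω ^ (-n) ∈ S := by
  have h := pow_add_pow_mem_of_mul_eq_one (mul_inv_cancel₀ hω) hS
  obtain ⟨N, rfl | rfl⟩ := Int.eq_nat_or_neg n
  · simpa [zpow_neg, inv_pow] using h N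
  · simpa [zpow_neg, inv_pow, add_comm] using h N

theorem exists_cyclotomicSine_eq_mul (hω : ω ≠ 0) (hS : ω + ω⁻¹ ∈ S) {m n : ℤ} {k : ℕ}
    (hk : ω ^ m = (ω ^ n) ^ k) : ∃ e ∈ S, cyclotomicSine ω m = cyclotomicSine ω n * e := by
  have hinv : ω ^ n * ω ^ (-n) = 1 := by rw [zpow_neg, mul_inv_cancel₀ (zpow_ne_zero n hω)]
  obtain ⟨e, he, h⟩ :=
    exists_pow_sub_pow_eq_mul_of_mul_eq_one hinv (zpow_add_zpow_neg_mem hω hS n) k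
  refine ⟨e, he, ?_⟩
  rwa [cyclotomicSine, cyclotomicSine, zpow_neg ω m, hk, ← inv_pow, ← zpow_neg]

theorem IsPrimitiveRoot.exists_zpow_eq_pow_zpow {p : ℕ} (hω : IsPrimitiveRoot ω p)
    (hp : p.Prime) {n : ℤ} (hn : ¬ (p : ℤ) ∣ n) (m : ℤ) : ∃ k : ℕ, ω ^ m = (ω ^ n) ^ k := by
  have : NeZero p := ⟨hp.ne_zero⟩
  have hcop : n.gcd p = 1 :=
    Nat.Coprime.symm (hp.coprime_iff_not_dvd.mpr (by rwa [Int.natCast_dvd] at hn))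
  obtain ⟨k, -, hk⟩ := (hω.zpow_of_gcd_eq_one n hcop).eq_pow_of_pow_eq_one (ξ := ω ^ m)
    (by rw [← zpow_natCast, ← zpow_mul, mul_comm, zpow_mul, zpow_natCast, hω.pow_eq_one,
      one_zpow])
  exact ⟨k, hk.symm⟩

theorem IsPrimitiveRoot.exists_unit_coe_eq_cyclotomicSine_div {p : ℕ} (hω : IsPrimitiveRoot ω p)
    (hp : p.Prime) (hp2 : p ≠ 2) (hS : ω + ω⁻¹ ∈ S) {m n : ℤ} (hm : ¬ (p : ℤ) ∣ m)
    (hn : ¬ (p : ℤ) ∣ n) : ∃ u : Sˣ, (u : K) = cyclotomicSine ω m / cyclotomicSine ω n := by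
  have hω0 : ω ≠ 0 := hω.ne_zero hp.ne_zero
  obtain ⟨k, hk⟩ := hω.exists_zpow_eq_pow_zpow hp hn m
  obtain ⟨e, he, hme⟩ := exists_cyclotomicSine_eq_mul hω0 hS hk
  obtain ⟨k', hk'⟩ := hω.exists_zpow_eq_pow_zpow hp hm n
  obtain ⟨f, hf, hnf⟩ := exists_cyclotomicSine_eq_mul hω0 hS hk'
  have hef : e * f = 1 := mul_left_cancel₀ (hω.cyclotomicSine_ne_zero_of_prime hp hp2 hm)
    (by linear_combination -hme - e * hnf)
  refine ⟨Units.mkOfMulEqOne ⟨e, he⟩ ⟨f, hf⟩ (Subtype.ext hef), ?_⟩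
  rw [Units.val_mkOfMulEqOne, eq_div_iff (hω.cyclotomicSine_ne_zero_of_prime hp hp2 hn), hme,
    mul_comm]

theorem IsPrimitiveRoot.exists_sq_eq {p : ℕ} {ζ : K} (hζ : IsPrimitiveRoot ζ p) (hp : Odd p)
    (hS : ζ + ζ⁻¹ ∈ S) : ∃ ω, IsPrimitiveRoot ω p ∧ ω ^ 2 = ζ ∧ ω + ω⁻¹ ∈ S := by
  obtain ⟨m, rfl⟩ := hp
  refine ⟨ζ ^ (m + 1), hζ.pow_of_coprime _ ?_, ?_, ?_⟩
  · rw [show 2 * m + 1 = m + 1 + m by ring, add_comm m 1, Nat.coprime_self_add_right]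
    exact Nat.coprime_add_self_left.mpr (Nat.coprime_one_left m)
  · rw [← pow_mul, show (m + 1) * 2 = 2 * m + 1 + 1 by ring, pow_succ, hζ.pow_eq_one, one_mul]
  · rw [← inv_pow]
    exact pow_add_pow_mem_of_mul_eq_one (mul_inv_cancel₀ (hζ.ne_zero (by omega))) hS _

theorem one_sub_sq_mul_inv_sub_inv_eq_cyclotomicSine_div (hω : ω ≠ 0) {a b : ℤ}
    (ha : cyclotomicSine ω a ≠ 0) (hb : cyclotomicSine ω b ≠ 0) :
    (1 - ω ^ 2) * (1 - (ω ^ 2)⁻¹) *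
        (((1 - (ω ^ 2) ^ a) * (1 - (ω ^ 2) ^ (-a)))⁻¹ -
          ((1 - (ω ^ 2) ^ b) * (1 - (ω ^ 2) ^ (-b)))⁻¹) =
      -(cyclotomicSine ω 1 / cyclotomicSine ω a * (cyclotomicSine ω 1 / cyclotomicSine ω b) *
        (cyclotomicSine ω (a + b) / cyclotomicSine ω a) *
        (cyclotomicSine ω (a - b) / cyclotomicSine ω b)) := by
  have h1 := one_sub_zpow_mul_one_sub_zpow_neg hω 1
  rw [zpow_one, zpow_neg_one] at h1
  rw [h1, one_sub_zpow_mul_one_sub_zpow_neg hω, one_sub_zpow_mul_one_sub_zpow_neg hω]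
  have := cyclotomicSine_sq_sub_sq hω a b
  field_simp
  linear_combination -cyclotomicSine ω 1 ^ 2 * this

end CyclotomicSine

/-- Let `t > 3` be a prime, `ζ` a primitive `t`-th root of unity,
`λ = (1-ζ)(1-ζ⁻¹)` and `λ_a = (1-ζ^a)(1-ζ^{-a})` for `t ∤ a`.  Then for
`a, b ∈ {1, …, t-1}` with `b ≢ a (mod t)` and `b ≢ -a (mod t)`, the element
`λ·(λ_a⁻¹ - λ_b⁻¹)` is a unit of `ℤ[ζ+ζ⁻¹]`. -/
theorem stmt_11 (t : ℕ+) (ht : (t : ℕ).Prime) (ht3 : 3 < (t : ℕ))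
    (ζ : CyclotomicField t ℚ) (hζ : IsPrimitiveRoot ζ (t : ℕ))
    (a b : ℕ) (ha1 : 1 ≤ a) (hat : a ≤ (t : ℕ) - 1) (hb1 : 1 ≤ b) (hbt : b ≤ (t : ℕ) - 1)
    (hba : ¬ ((b : ℤ) ≡ (a : ℤ) [ZMOD (t : ℕ)]))
    (hba' : ¬ ((b : ℤ) ≡ -(a : ℤ) [ZMOD (t : ℕ)])) :
    ∃ u : (Algebra.adjoin ℤ ({ζ + ζ⁻¹} : Set (CyclotomicField t ℚ)))ˣ,
      ((u : Algebra.adjoin ℤ ({ζ + ζ⁻¹} : Set (CyclotomicField t ℚ))) :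
          CyclotomicField t ℚ) =
        (1 - ζ) * (1 - ζ⁻¹) *
          (((1 - ζ ^ a) * (1 - ζ ^ (-(a : ℤ))))⁻¹ -
            ((1 - ζ ^ b) * (1 - ζ ^ (-(b : ℤ))))⁻¹) := by
  have ht2 : (t : ℕ) ≠ 2 := by omega
  obtain ⟨ω, hω, rfl, hS⟩ :=
    hζ.exists_sq_eq (ht.odd_of_ne_two ht2) (Algebra.subset_adjoin (Set.mem_singleton _))
  have hsmall {n : ℕ} (h0 : 1 ≤ n) (hn : n ≤ (t : ℕ) - 1) : ¬ ((t : ℕ) : ℤ) ∣ n := fun h => by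
    have := Nat.le_of_dvd (by omega) (Int.natCast_dvd_natCast.mp h); omega
  have hsum : ¬ ((t : ℕ) : ℤ) ∣ a + b := fun h =>
    hba' (Int.modEq_iff_dvd.mpr (by rw [show -(a : ℤ) - b = -(a + b) by ring]; exact h.neg_right))
  have hdiff : ¬ ((t : ℕ) : ℤ) ∣ a - b := fun h => hba (Int.modEq_iff_dvd.mpr h)
  have hω0 : ω ≠ 0 := hω.ne_zero ht.ne_zero
  have h1 : ¬ ((t : ℕ) : ℤ) ∣ 1 := by exact_mod_cast ht.not_dvd_one
  obtain ⟨u₁, hu₁⟩ := hω.exists_unit_coe_eq_cyclotomicSine_div ht ht2 hS h1 (hsmall ha1 hat)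
  obtain ⟨u₂, hu₂⟩ := hω.exists_unit_coe_eq_cyclotomicSine_div ht ht2 hS h1 (hsmall hb1 hbt)
  obtain ⟨u₃, hu₃⟩ := hω.exists_unit_coe_eq_cyclotomicSine_div ht ht2 hS hsum (hsmall ha1 hat)
  obtain ⟨u₄, hu₄⟩ := hω.exists_unit_coe_eq_cyclotomicSine_div ht ht2 hS hdiff (hsmall hb1 hbt)
  refine ⟨-(u₁ * u₂ * u₃ * u₄), ?_⟩
  rw [← zpow_natCast (ω ^ 2) a, ← zpow_natCast (ω ^ 2) b,
    one_sub_sq_mul_inv_sub_inv_eq_cyclotomicSine_div hω0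
      (hω.cyclotomicSine_ne_zero_of_prime ht ht2 (hsmall ha1 hat))
      (hω.cyclotomicSine_ne_zero_of_prime ht ht2 (hsmall hb1 hbt))]
  simp only [Units.val_neg, Units.val_mul, NegMemClass.coe_neg, Subalgebra.coe_mul, hu₁, hu₂, hu₃,
    hu₄]
end

section
/- Let t be an odd prime and ζ a primitive t-th root of unity, with complex conjugation j the automorphism of ℚ(ζ) sending ζ to ζ⁻¹. If ξ₁ is an element of ℤ[ζ] such that j(ξ₁)^t = ξ₁^t, then there exists ξ ∈ ℤ[ζ] with j(ξ) = ξ (i.e., ξ lies in ℤ[ζ+ζ̄]) and ξ^t = ξ₁^t. -/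
open NumberField

/-- Let `t` be an odd prime, `ζ` a primitive `t`-th root of unity in
`ℚ(ζ_t)`, and `j` the complex conjugation automorphism of `ℚ(ζ_t)` (sending `ζ` to
`ζ⁻¹`).  If `ξ₁` is an element of the ring of integers `ℤ[ζ]` with `j(ξ₁)^t = ξ₁^t`,
then there exists `ξ ∈ ℤ[ζ]` fixed by `j` (i.e. lying in `ℤ[ζ+ζ̄]`) with
`ξ^t = ξ₁^t`. -/
theorem stmt_12 (t : ℕ+) (ht : (t : ℕ).Prime) (hodd : Odd (t : ℕ))
    (ζ : CyclotomicField t ℚ) (hζ : IsPrimitiveRoot ζ (t : ℕ))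
    (j : CyclotomicField t ℚ ≃ₐ[ℚ] CyclotomicField t ℚ) (hj : j ζ = ζ⁻¹)
    (ξ₁ : 𝓞 (CyclotomicField t ℚ))
    (hξ₁ : (j (ξ₁ : CyclotomicField t ℚ)) ^ (t : ℕ) =
      (ξ₁ : CyclotomicField t ℚ) ^ (t : ℕ)) :
    ∃ ξ : 𝓞 (CyclotomicField t ℚ),
      j (ξ : CyclotomicField t ℚ) = (ξ : CyclotomicField t ℚ) ∧
      ξ ^ (t : ℕ) = ξ₁ ^ (t : ℕ) := by
  rcases eq_or_ne ξ₁ 0 with h0 | h0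
  · exact ⟨0, by simp, by simp [h0]⟩
  · have hK0 : (ξ₁ : CyclotomicField t ℚ) ≠ 0 := by
      simpa using h0
    have hζ0 : ζ ≠ 0 := hζ.ne_zero ht.ne_zero
    have hu : ((j (ξ₁ : CyclotomicField t ℚ)) / ξ₁) ^ (t : ℕ) = 1 := by
      rw [div_pow, hξ₁, div_self (pow_ne_zero _ hK0)]
    obtain ⟨k, hk_lt, hk⟩ := hζ.eq_pow_of_pow_eq_one hu
    rw [eq_div_iff hK0] at hk
    -- hk : ζ ^ k * ξ₁ = j ξ₁
    set m : ℕ := k * (((t : ℕ) + 1) / 2) with hm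
    have h2 : (((t : ℕ) + 1) / 2) * 2 = (t : ℕ) + 1 :=
      Nat.div_mul_cancel (even_iff_two_dvd.mp hodd.add_one)
    have hζt : ζ ^ (t : ℕ) = 1 := hζ.pow_eq_one
    have key : ζ ^ (2 * m) = ζ ^ k := by
      have h2m : 2 * m = k * (t : ℕ) + k := by
        rw [hm]; rw [mul_comm 2, mul_assoc, h2]; ring
      rw [h2m, pow_add, mul_comm k, pow_mul, hζt, one_pow, one_mul]
    refine ⟨hζ.toInteger ^ m * ξ₁, ?_, ?_⟩
    · have hcoe : ((hζ.toInteger ^ m * ξ₁ : 𝓞 (CyclotomicField t ℚ)) :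
          CyclotomicField t ℚ) = ζ ^ m * ξ₁ := by
        push_cast
        rfl
      rw [hcoe, map_mul, map_pow, hj, ← hk, inv_pow]
      rw [two_mul, pow_add] at key
      rw [← key, mul_assoc, ← mul_assoc (ζ ^ m)⁻¹,
        inv_mul_cancel₀ (pow_ne_zero _ hζ0), one_mul]
    · have hζint : hζ.toInteger ^ (t : ℕ) = 1 := hζ.toInteger_isPrimitiveRoot.pow_eq_one
      rw [mul_pow, ← pow_mul, mul_comm m, pow_mul, hζint, one_pow, one_mul]
end

section
/- Let t > 3 be a prime, ζ a primitive t-th root of unity, λ = (1-ζ)(1-ζ̄), and for an integer a not divisible by t set λ_a = (1-ζ^a)(1-ζ^{-a}). Let x, y be elements of ℤ[ζ+ζ̄] and suppose that for a, b ∈ {1, …, t-1} with b ≢ ±a (mod t) there are units η_0, η_a, η_b of ℤ[ζ+ζ̄], elements ρ_a, ρ_b of ℤ[ζ], an element ρ_0 of ℤ[ζ+ζ̄], an integer m ≥ t, and a nonzero integer B with x + y = η_0·B·λ^{m-(t-1)/2}·ρ_0^t and (x + ζ^c·y)/(1 - ζ^c) = η_c·ρ_c^t for c ∈ {a, b} (where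 the conjugate relations (x + ζ^{-c}·y)/(1 - ζ^{-c}) = η_c·(ρ̄_c)^t also hold since x, y, η_c are real). Then there exists a unit η' of ℤ[ζ+ζ̄] such that (η_a/η_b)²·(ρ_a·ρ̄_a)^t + (-ρ_b·ρ̄_b)^t = η'·B²·λ^{2m-t}·(ρ_0²)^t. -/
/-!
Multiplying each relation by its conjugate gives, with `N_c = (ρ_c ρ̄_c)^t`,
`λ_c η_c² N_c = (x + ζ^c y)(x + ζ^{-c} y) = (x + y)² - λ_c x y`, and eliminating `x y`
between `c = a` and `c = b` leaves `λ_a λ_b (η_a² N_a - η_b² N_b) = (λ_b - λ_a) (x + y)²`.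
For `t ∤ c` the cyclotomic unit `λ_c / λ` is real, and so is
`(λ_b - λ_a) / λ = ζ^a (1 - ζ^{b-a}) (1 - ζ^{-a-b}) / λ` when `b ≢ ±a`. Real units of `ℤ[ζ]` are
units of `ℤ[ζ + ζ̄]`, since `ℤ[ζ] = ℤ[ζ + ζ̄] + ℤ[ζ + ζ̄] ζ` and `ζ ≠ ζ̄`. Substituting
`(x + y)² = η₀² B² λ^{2m-t+1} (ρ₀²)^t` and dividing by `λ² η_b²` gives the claim; `t` is odd, so
`(-ρ_b ρ̄_b)^t = -N_b`.
-/

open NumberField Algebra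

theorem IsPrimitiveRoot.of_mul_eq_one {M : Type*} [CommMonoid M] {ζ ζbar : M} {t : ℕ}
    (hζ : IsPrimitiveRoot ζ t) (hζbar : ζ * ζbar = 1) : IsPrimitiveRoot ζbar t where
  pow_eq_one := by
    simpa [mul_pow, hζ.pow_eq_one] using congrArg (· ^ t) hζbar
  dvd_of_pow_eq_one l hl :=
    hζ.dvd_of_pow_eq_one l (by simpa [mul_pow, hl] using congrArg (· ^ l) hζbar)

theorem sq_mul_pow_sub_div_two_mul_pow {M : Type*} [CommSemiring M] {t m : ℕ} (ht : Odd t)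
    (hm : t ≤ 2 * m) (c l r : M) :
    (c * l ^ (m - (t - 1) / 2) * r ^ t) ^ 2 = l * (c ^ 2 * l ^ (2 * m - t) * (r ^ 2) ^ t) := by
  have ht' := Nat.odd_iff.1 ht
  obtain ⟨k, hk, hk'⟩ : ∃ k, m - (t - 1) / 2 = k + 1 ∧ 2 * m - t = 2 * k + 1 :=
    ⟨m - (t - 1) / 2 - 1, by omega, by omega⟩
  rw [hk, hk']
  ring

section RealSubring

variable {R F : Type*} [CommRing R] [FunLike F R R] [RingHomClass F R R] {ζ ζbar : R}

theorem exists_eq_add_mul_of_mem_adjoin (hζbar : ζ * ζbar = 1) {z : R}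
    (hz : z ∈ adjoin ℤ {ζ}) :
    ∃ A ∈ adjoin ℤ {ζ + ζbar}, ∃ B ∈ adjoin ℤ {ζ + ζbar}, z = A + B * ζ := by
  set S := adjoin ℤ {ζ + ζbar}
  have hs : ζ + ζbar ∈ S := subset_adjoin rfl
  induction hz using Algebra.adjoin_induction with
  | mem w hw => exact ⟨0, S.zero_mem, 1, S.one_mem, by rw [Set.mem_singleton_iff.1 hw]; ring⟩
  | algebraMap n => exact ⟨algebraMap ℤ R n, S.algebraMap_mem n, 0, S.zero_mem, by ring⟩
  | add u v _ _ ihu ihv =>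
    obtain ⟨A, hA, B, hB, rfl⟩ := ihu
    obtain ⟨C, hC, D, hD, rfl⟩ := ihv
    exact ⟨A + C, S.add_mem hA hC, B + D, S.add_mem hB hD, by ring⟩
  | mul u v _ _ ihu ihv =>
    obtain ⟨A, hA, B, hB, rfl⟩ := ihu
    obtain ⟨C, hC, D, hD, rfl⟩ := ihv
    -- `ζ ^ 2 = (ζ + ζbar) * ζ - 1`
    refine ⟨A * C - B * D, S.sub_mem (S.mul_mem hA hC) (S.mul_mem hB hD),
      A * D + B * C + B * D * (ζ + ζbar),
      S.add_mem (S.add_mem (S.mul_mem hA hD) (S.mul_mem hB hC)) (S.mul_mem (S.mul_mem hB hD) hs),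
      ?_⟩
    linear_combination (-(B * D)) * hζbar

theorem conj_eq_self_of_mem_adjoin (conj : F) (hconj : conj ζ = ζbar)
    (hconj' : conj ζbar = ζ) {z : R} (hz : z ∈ adjoin ℤ {ζ + ζbar}) : conj z = z := by
  induction hz using Algebra.adjoin_induction with
  | mem w hw => rw [Set.mem_singleton_iff.1 hw, map_add, hconj, hconj', add_comm]
  | algebraMap n => exact map_intCast conj n
  | add u v _ _ ihu ihv => rw [map_add, ihu, ihv]
  | mul u v _ _ ihu ihv => rw [map_mul, ihu, ihv]

theorem pow_add_pow_sub_pow_add_pow (hζbar : ζ * ζbar = 1) {a b d : ℕ}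
    (hd : ζ ^ a * ζ ^ d = ζ ^ b) :
    (ζ ^ a + ζbar ^ a) - (ζ ^ b + ζbar ^ b) = ζ ^ a * ((1 - ζ ^ d) * (1 - ζbar ^ (a + b))) := by
  have hpow (k : ℕ) : ζ ^ k * ζbar ^ k = 1 := by rw [← mul_pow, hζbar, one_pow]
  linear_combination (1 - ζbar ^ a * ζbar ^ b) * hd + ζbar ^ b * hpow a - ζbar ^ a * hpow b

theorem one_sub_pow_mul_one_sub_pow_mul_sub_eq (hζbar : ζ * ζbar = 1) {a b : ℕ}
    {x y ea ea' eb eb' : R}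
    (ha : x + ζ ^ a * y = (1 - ζ ^ a) * ea) (ha' : x + ζbar ^ a * y = (1 - ζbar ^ a) * ea')
    (hb : x + ζ ^ b * y = (1 - ζ ^ b) * eb) (hb' : x + ζbar ^ b * y = (1 - ζbar ^ b) * eb') :
    (1 - ζ ^ a) * (1 - ζbar ^ a) * ((1 - ζ ^ b) * (1 - ζbar ^ b)) * (ea * ea' - eb * eb') =
      ((ζ ^ a + ζbar ^ a) - (ζ ^ b + ζbar ^ b)) * (x + y) ^ 2 := by
  have hpow (k : ℕ) : ζ ^ k * ζbar ^ k = 1 := by rw [← mul_pow, hζbar, one_pow]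
  have hnorm {c : ℕ} {e e' : R} (h : x + ζ ^ c * y = (1 - ζ ^ c) * e)
      (h' : x + ζbar ^ c * y = (1 - ζbar ^ c) * e') :
      (1 - ζ ^ c) * (1 - ζbar ^ c) * (e * e') =
        (x + y) ^ 2 - (1 - ζ ^ c) * (1 - ζbar ^ c) * x * y := by
    linear_combination (-(x + ζbar ^ c * y)) * h - (1 - ζ ^ c) * e * h' + (x + y) * y * hpow c
  linear_combination (1 - ζ ^ b) * (1 - ζbar ^ b) * hnorm ha ha'
    - (1 - ζ ^ a) * (1 - ζbar ^ a) * hnorm hb hb' + (x + y) ^ 2 * (hpow b - hpow a)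

end RealSubring

section RealUnits

variable {R F : Type*} [CommRing R] [IsDomain R] [FunLike F R R] [RingHomClass F R R]
  {ζ ζbar : R} {t : ℕ} {S : Subalgebra ℤ R}

theorem mem_adjoin_of_conj_eq_self (conj : F) (hζbar : ζ * ζbar = 1)
    (hconj : conj ζ = ζbar) (hconj' : conj ζbar = ζ) (hne : ζ ≠ ζbar)
    (htop : adjoin ℤ {ζ} = ⊤) {z : R} (hz : conj z = z) : z ∈ adjoin ℤ {ζ + ζbar} := by
  obtain ⟨A, hA, B, hB, rfl⟩ :=
    exists_eq_add_mul_of_mem_adjoin hζbar (htop ▸ mem_top : z ∈ adjoin ℤ {ζ})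
  rw [map_add, map_mul, conj_eq_self_of_mem_adjoin conj hconj hconj' hA,
    conj_eq_self_of_mem_adjoin conj hconj hconj' hB, hconj] at hz
  have hB0 : B * (ζ - ζbar) = 0 := by linear_combination -hz
  obtain rfl := (mul_eq_zero.1 hB0).resolve_right (sub_ne_zero.2 hne)
  simpa using hA

theorem exists_unit_mul_eq_of_associated (conj : F)
    (hS : ∀ z, conj z = z → z ∈ S) {l r : R} (hl : conj l = l) (hl0 : l ≠ 0)
    (hr : conj r = r) (h : Associated l r) : ∃ w : Sˣ, l * ((w : S) : R) = r := by
  obtain ⟨u, rfl⟩ := h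
  have hu : conj u = u := mul_left_cancel₀ hl0 (by rwa [map_mul, hl] at hr)
  have hu' : conj ↑u⁻¹ = ↑u⁻¹ :=
    (Units.inv_eq_of_mul_eq_one_left (by rw [← hu, ← map_mul, Units.inv_mul, map_one])).symm
  exact ⟨⟨⟨u, hS _ hu⟩, ⟨_, hS _ hu'⟩, Subtype.ext u.mul_inv, Subtype.ext u.inv_mul⟩, rfl⟩

theorem associated_one_sub_mul_one_sub {t j k : ℕ} (hζ : IsPrimitiveRoot ζ t)
    (hζbar : IsPrimitiveRoot ζbar t) (hj : j.Coprime t) (hk : k.Coprime t) :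
    Associated ((1 - ζ) * (1 - ζbar)) ((1 - ζ ^ j) * (1 - ζbar ^ k)) := by
  rw [show (1 - ζ) * (1 - ζbar) = (ζ - 1) * (ζbar - 1) by ring,
    show (1 - ζ ^ j) * (1 - ζbar ^ k) = (ζ ^ j - 1) * (ζbar ^ k - 1) by ring]
  exact (hζ.associated_sub_one_pow_sub_one_of_coprime hj).mul_mul
    (hζbar.associated_sub_one_pow_sub_one_of_coprime hk)

theorem one_sub_mul_one_sub_ne_zero (ht : 1 < t) (hζ : IsPrimitiveRoot ζ t)
    (hζbar : IsPrimitiveRoot ζbar t) : (1 - ζ) * (1 - ζbar) ≠ 0 :=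
  mul_ne_zero (sub_ne_zero.2 (hζ.ne_one ht).symm) (sub_ne_zero.2 (hζbar.ne_one ht).symm)

theorem exists_unit_mul_eq_of_associated_one_sub_mul_one_sub (conj : F)
    (hconj : conj ζ = ζbar) (hconj' : conj ζbar = ζ)
    (hreal : ∀ z, conj z = z → z ∈ S) (ht : 1 < t)
    (hζ : IsPrimitiveRoot ζ t) (hζbar : IsPrimitiveRoot ζbar t) {j k : ℕ} (hj : j.Coprime t)
    (hk : k.Coprime t) {r : R} (hr : conj r = r)
    (h : Associated ((1 - ζ ^ j) * (1 - ζbar ^ k)) r) :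
    ∃ w : Sˣ, (1 - ζ) * (1 - ζbar) * ((w : S) : R) = r :=
  exists_unit_mul_eq_of_associated conj hreal
    (by rw [map_mul, map_sub, map_sub, map_one, hconj, hconj', mul_comm])
    (one_sub_mul_one_sub_ne_zero ht hζ hζbar) hr
    ((associated_one_sub_mul_one_sub hζ hζbar hj hk).trans h)

theorem exists_unit_mul_eq_one_sub_pow_mul_one_sub_pow (conj : F)
    (hconj : conj ζ = ζbar) (hconj' : conj ζbar = ζ)
    (hreal : ∀ z, conj z = z → z ∈ S) (ht : t.Prime)
    (hζ : IsPrimitiveRoot ζ t) (hζbar : IsPrimitiveRoot ζbar t) {k : ℕ} (hk : ¬ t ∣ k) :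
    ∃ w : Sˣ, (1 - ζ) * (1 - ζbar) * ((w : S) : R) =
      (1 - ζ ^ k) * (1 - ζbar ^ k) := by
  have hk' : k.Coprime t := Nat.coprime_comm.1 (ht.coprime_iff_not_dvd.2 hk)
  refine exists_unit_mul_eq_of_associated_one_sub_mul_one_sub conj hconj hconj' hreal
    ht.one_lt hζ hζbar hk' hk' ?_ (Associated.refl _)
  rw [map_mul, map_sub, map_sub, map_one, map_pow, map_pow, hconj, hconj', mul_comm]

theorem exists_unit_mul_eq_pow_add_pow_sub_pow_add_pow (conj : F)
    (hconj : conj ζ = ζbar) (hconj' : conj ζbar = ζ)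
    (hreal : ∀ z, conj z = z → z ∈ S) (ht : t.Prime)
    (hζ : IsPrimitiveRoot ζ t) (hζζbar : ζ * ζbar = 1) {a b : ℕ}
    (hba : ¬ (b : ℤ) ≡ a [ZMOD t]) (hba' : ¬ (b : ℤ) ≡ -a [ZMOD t]) :
    ∃ w : Sˣ, (1 - ζ) * (1 - ζbar) * ((w : S) : R) =
      (ζ ^ a + ζbar ^ a) - (ζ ^ b + ζbar ^ b) := by
  -- `d ≡ b - a (mod t)`, written without truncated subtraction
  set d := b + (t - 1) * a with hd_def
  have hd : ζ ^ a * ζ ^ d = ζ ^ b := by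
    rw [← pow_add, show a + d = b + t * a by
      rw [hd_def, Nat.sub_one_mul]; have := Nat.le_mul_of_pos_left a ht.pos; omega,
      pow_add, pow_mul, hζ.pow_eq_one, one_pow, mul_one]
  have hd_coprime : d.Coprime t := by
    refine Nat.coprime_comm.1 (ht.coprime_iff_not_dvd.2 fun h ↦ hba ?_)
    rw [Int.modEq_iff_dvd, show (a : ℤ) - b = t * a - d by
      push_cast [hd_def, Nat.cast_sub ht.one_le]; ring]
    exact dvd_sub (dvd_mul_right _ _) (Int.natCast_dvd_natCast.2 h)
  have he_coprime : (a + b).Coprime t := by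
    refine Nat.coprime_comm.1 (ht.coprime_iff_not_dvd.2 fun h ↦ hba' ?_)
    rw [Int.modEq_iff_dvd, show -(a : ℤ) - b = -((a + b : ℕ) : ℤ) by push_cast; ring]
    exact (Int.natCast_dvd_natCast.2 h).neg_right
  refine exists_unit_mul_eq_of_associated_one_sub_mul_one_sub conj hconj hconj' hreal
    ht.one_lt hζ (hζ.of_mul_eq_one hζζbar) hd_coprime he_coprime ?_ ?_
  · rw [map_sub, map_add, map_add, map_pow, map_pow, map_pow, map_pow, hconj, hconj',
      add_comm (ζbar ^ a), add_comm (ζbar ^ b)]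
  · rw [pow_add_pow_sub_pow_add_pow hζζbar hd]
    exact (associated_unit_mul_left _ _ ((hζ.isUnit ht.ne_zero).pow a)).symm

theorem exists_unit_sq_mul_pow_add_neg_pow_eq (conj : F) (hconj : conj ζ = ζbar)
    (hconj' : conj ζbar = ζ) (hreal : ∀ z, conj z = z → z ∈ S) (ht : t.Prime) (ht2 : t ≠ 2)
    (hζ : IsPrimitiveRoot ζ t) (hζbar : ζ * ζbar = 1) {a b m : ℕ} (ha : ¬ t ∣ a)
    (hb : ¬ t ∣ b) (hba : ¬ (b : ℤ) ≡ a [ZMOD t]) (hba' : ¬ (b : ℤ) ≡ -a [ZMOD t])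
    (hm : t ≤ 2 * m) {x y B ρ₀ ρa ρb : R} {η₀ ηa ηb : Sˣ}
    (h0 : x + y = ((η₀ : S) : R) * B * ((1 - ζ) * (1 - ζbar)) ^ (m - (t - 1) / 2) * ρ₀ ^ t)
    (hha : x + ζ ^ a * y = (1 - ζ ^ a) * (((ηa : S) : R) * ρa ^ t))
    (hhb : x + ζ ^ b * y = (1 - ζ ^ b) * (((ηb : S) : R) * ρb ^ t))
    (hhabar : x + ζbar ^ a * y = (1 - ζbar ^ a) * (((ηa : S) : R) * conj ρa ^ t))
    (hhbbar : x + ζbar ^ b * y = (1 - ζbar ^ b) * (((ηb : S) : R) * conj ρb ^ t)) :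
    ∃ η' : Sˣ, (((ηa * ηb⁻¹ : Sˣ) : S) : R) ^ 2 * (ρa * conj ρa) ^ t + (-(ρb * conj ρb)) ^ t =
      ((η' : S) : R) * B ^ 2 * ((1 - ζ) * (1 - ζbar)) ^ (2 * m - t) * (ρ₀ ^ 2) ^ t := by
  have hζbar' := hζ.of_mul_eq_one hζbar
  have hodd : Odd t := ht.odd_of_ne_two ht2
  obtain ⟨wa, hwa⟩ :=
    exists_unit_mul_eq_one_sub_pow_mul_one_sub_pow conj hconj hconj' hreal ht hζ hζbar' ha
  obtain ⟨wb, hwb⟩ :=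
    exists_unit_mul_eq_one_sub_pow_mul_one_sub_pow conj hconj hconj' hreal ht hζ hζbar' hb
  obtain ⟨w0, hw0⟩ :=
    exists_unit_mul_eq_pow_add_pow_sub_pow_add_pow conj hconj hconj' hreal ht hζ hζbar hba hba'
  obtain ⟨q, rfl⟩ : ∃ q, ηa = q * ηb := ⟨ηa * ηb⁻¹, by simp⟩
  set L := (1 - ζ) * (1 - ζbar)
  have hsq := h0 ▸ sq_mul_pow_sub_div_two_mul_pow hodd hm (((η₀ : S) : R) * B) L ρ₀
  have key := one_sub_pow_mul_one_sub_pow_mul_sub_eq hζbar hha hhabar hhb hhbbar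
  rw [← hwa, ← hwb, ← hw0, hsq] at key
  have hcancel : ((wa : S) : R) * ((wb : S) : R) * (((q : S) : R) ^ 2 * ((ηb : S) : R) ^ 2 *
      (ρa * conj ρa) ^ t - ((ηb : S) : R) ^ 2 * (ρb * conj ρb) ^ t) =
      ((w0 : S) : R) * ((((η₀ : S) : R) * B) ^ 2 * L ^ (2 * m - t) * (ρ₀ ^ 2) ^ t) := by
    refine mul_left_cancel₀ (pow_ne_zero 2 (one_sub_mul_one_sub_ne_zero ht.one_lt hζ hζbar')) ?_
    push_cast at key
    linear_combination key
  refine ⟨(wa * wb * ηb ^ 2)⁻¹ * (w0 * η₀ ^ 2), ?_⟩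
  have hu := congrArg Subtype.val (wa * wb * ηb ^ 2).mul_inv
  rw [mul_inv_cancel_right, hodd.neg_pow]
  push_cast at hu ⊢
  linear_combination ((((wa * wb * ηb ^ 2)⁻¹ : Sˣ) : S) : R) * hcancel
    - (((q : S) : R) ^ 2 * (ρa * conj ρa) ^ t - (ρb * conj ρb) ^ t) * hu

end RealUnits

theorem stmt_14_general (t : ℕ+) (ht : (t : ℕ).Prime) (ht3 : 3 < (t : ℕ))
    (ζ ζbar : 𝓞 (CyclotomicField t ℚ)) (hζ : IsPrimitiveRoot ζ (t : ℕ))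
    (hζbar : ζ * ζbar = 1)
    (conj : 𝓞 (CyclotomicField t ℚ) ≃+* 𝓞 (CyclotomicField t ℚ))
    (hconj : conj ζ = ζbar)
    (lam : Algebra.adjoin ℤ ({ζ + ζbar} : Set (𝓞 (CyclotomicField t ℚ))))
    (hlam : (lam : 𝓞 (CyclotomicField t ℚ)) = (1 - ζ) * (1 - ζbar))
    (x y : Algebra.adjoin ℤ ({ζ + ζbar} : Set (𝓞 (CyclotomicField t ℚ))))
    (a b : ℕ) (ha1 : 1 ≤ a) (hat : a ≤ (t : ℕ) - 1) (hb1 : 1 ≤ b) (hbt : b ≤ (t : ℕ) - 1)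
    (hba : ¬ ((b : ℤ) ≡ (a : ℤ) [ZMOD (t : ℕ)]))
    (hba' : ¬ ((b : ℤ) ≡ -(a : ℤ) [ZMOD (t : ℕ)]))
    (η₀ ηa ηb : (Algebra.adjoin ℤ ({ζ + ζbar} : Set (𝓞 (CyclotomicField t ℚ))))ˣ)
    (ρ₀ : Algebra.adjoin ℤ ({ζ + ζbar} : Set (𝓞 (CyclotomicField t ℚ))))
    (ρa ρb : 𝓞 (CyclotomicField t ℚ))
    (m : ℕ) (hm : (t : ℕ) ≤ m) (B : ℤ)
    (h0 : x + y =
      η₀ * (B : Algebra.adjoin ℤ ({ζ + ζbar} : Set (𝓞 (CyclotomicField t ℚ)))) *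
        lam ^ (m - ((t : ℕ) - 1) / 2) * ρ₀ ^ (t : ℕ))
    (hha : (x : 𝓞 (CyclotomicField t ℚ)) + ζ ^ a * (y : 𝓞 (CyclotomicField t ℚ)) =
      (1 - ζ ^ a) * (((ηa : Algebra.adjoin ℤ ({ζ + ζbar} :
        Set (𝓞 (CyclotomicField t ℚ)))) : 𝓞 (CyclotomicField t ℚ)) * ρa ^ (t : ℕ)))
    (hhb : (x : 𝓞 (CyclotomicField t ℚ)) + ζ ^ b * (y : 𝓞 (CyclotomicField t ℚ)) =
      (1 - ζ ^ b) * (((ηb : Algebra.adjoin ℤ ({ζ + ζbar} :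
        Set (𝓞 (CyclotomicField t ℚ)))) : 𝓞 (CyclotomicField t ℚ)) * ρb ^ (t : ℕ)))
    (hhabar : (x : 𝓞 (CyclotomicField t ℚ)) + ζbar ^ a * (y : 𝓞 (CyclotomicField t ℚ)) =
      (1 - ζbar ^ a) * (((ηa : Algebra.adjoin ℤ ({ζ + ζbar} :
        Set (𝓞 (CyclotomicField t ℚ)))) : 𝓞 (CyclotomicField t ℚ)) *
          (conj ρa) ^ (t : ℕ)))
    (hhbbar : (x : 𝓞 (CyclotomicField t ℚ)) + ζbar ^ b * (y : 𝓞 (CyclotomicField t ℚ)) =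
      (1 - ζbar ^ b) * (((ηb : Algebra.adjoin ℤ ({ζ + ζbar} :
        Set (𝓞 (CyclotomicField t ℚ)))) : 𝓞 (CyclotomicField t ℚ)) *
          (conj ρb) ^ (t : ℕ))) :
    ∃ η' : (Algebra.adjoin ℤ ({ζ + ζbar} : Set (𝓞 (CyclotomicField t ℚ))))ˣ,
      (((ηa * ηb⁻¹ : (Algebra.adjoin ℤ ({ζ + ζbar} :
          Set (𝓞 (CyclotomicField t ℚ))))ˣ) : Algebra.adjoin ℤ ({ζ + ζbar} :
          Set (𝓞 (CyclotomicField t ℚ)))) : 𝓞 (CyclotomicField t ℚ)) ^ 2 *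
          (ρa * conj ρa) ^ (t : ℕ) + (-(ρb * conj ρb)) ^ (t : ℕ) =
        ((η' : Algebra.adjoin ℤ ({ζ + ζbar} :
          Set (𝓞 (CyclotomicField t ℚ)))) : 𝓞 (CyclotomicField t ℚ)) *
          (B : 𝓞 (CyclotomicField t ℚ)) ^ 2 *
          (lam : 𝓞 (CyclotomicField t ℚ)) ^ (2 * m - (t : ℕ)) *
          ((ρ₀ : 𝓞 (CyclotomicField t ℚ)) ^ 2) ^ (t : ℕ) := by
  have hconj' : conj ζbar = ζ :=
    (left_inv_eq_right_inv hζbar (by simpa [hconj] using congrArg conj hζbar)).symm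
  have hne : ζ ≠ ζbar := fun h ↦ hζ.pow_ne_one_of_pos_of_lt two_ne_zero (by omega)
    (by rw [sq]; nth_rw 2 [h]; exact hζbar)
  have htop : Algebra.adjoin ℤ {ζ} = ⊤ := IsCyclotomicExtension.Rat.adjoin_singleton_eq_top
    (hK := CyclotomicField.isCyclotomicExtension (t : ℕ) ℚ)
    (hζ.map_of_injective (IsFractionRing.injective _ (CyclotomicField t ℚ)))
  have hnd {c : ℕ} (h1 : 1 ≤ c) (h2 : c ≤ (t : ℕ) - 1) : ¬ (t : ℕ) ∣ c :=
    fun h ↦ by have := Nat.le_of_dvd (by omega) h; omega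
  rw [hlam]
  exact exists_unit_sq_mul_pow_add_neg_pow_eq conj hconj hconj'
    (fun z ↦ mem_adjoin_of_conj_eq_self conj hζbar hconj hconj' hne htop) ht (by omega) hζ hζbar
    (hnd ha1 hat) (hnd hb1 hbt) hba hba' (by omega)
    (by simpa [hlam] using congrArg Subtype.val h0) hha hhb hhabar hhbbar

/-- Let `t > 3` be a prime, `ζ ∈ ℤ[ζ]` (the ring of integers of
`ℚ(ζ_t)`) a primitive `t`-th root of unity, `ζbar = ζ⁻¹`, `λ = (1-ζ)(1-ζbar)`, and let
`conj` denote complex conjugation on `ℤ[ζ]` (the ring automorphism with `conj ζ = ζbar`).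
Let `x, y ∈ ℤ[ζ+ζbar]`, and suppose for `a, b ∈ {1, …, t-1}` with `b ≢ ±a (mod t)` there
are units `η₀, η_a, η_b` of `ℤ[ζ+ζbar]`, elements `ρ_a, ρ_b ∈ ℤ[ζ]`, `ρ₀ ∈ ℤ[ζ+ζbar]`,
`m ≥ t` and a nonzero integer `B` with `x + y = η₀·B·λ^{m-(t-1)/2}·ρ₀^t`,
`(x + ζ^c·y)/(1-ζ^c) = η_c·ρ_c^t` for `c ∈ {a,b}`, together with the conjugate
relations.  Then there is a unit `η'` of `ℤ[ζ+ζbar]` with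
`(η_a/η_b)²·(ρ_a·ρ̄_a)^t + (-ρ_b·ρ̄_b)^t = η'·B²·λ^{2m-t}·(ρ₀²)^t`. -/
theorem stmt_14 (t : ℕ+) (ht : (t : ℕ).Prime) (ht3 : 3 < (t : ℕ))
    (ζ ζbar : 𝓞 (CyclotomicField t ℚ)) (hζ : IsPrimitiveRoot ζ (t : ℕ))
    (hζbar : ζ * ζbar = 1)
    (conj : 𝓞 (CyclotomicField t ℚ) ≃+* 𝓞 (CyclotomicField t ℚ))
    (hconj : conj ζ = ζbar)
    (lam : Algebra.adjoin ℤ ({ζ + ζbar} : Set (𝓞 (CyclotomicField t ℚ))))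
    (hlam : (lam : 𝓞 (CyclotomicField t ℚ)) = (1 - ζ) * (1 - ζbar))
    (x y : Algebra.adjoin ℤ ({ζ + ζbar} : Set (𝓞 (CyclotomicField t ℚ))))
    (a b : ℕ) (ha1 : 1 ≤ a) (hat : a ≤ (t : ℕ) - 1) (hb1 : 1 ≤ b) (hbt : b ≤ (t : ℕ) - 1)
    (hba : ¬ ((b : ℤ) ≡ (a : ℤ) [ZMOD (t : ℕ)]))
    (hba' : ¬ ((b : ℤ) ≡ -(a : ℤ) [ZMOD (t : ℕ)]))
    (η₀ ηa ηb : (Algebra.adjoin ℤ ({ζ + ζbar} : Set (𝓞 (CyclotomicField t ℚ))))ˣ)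
    (ρ₀ : Algebra.adjoin ℤ ({ζ + ζbar} : Set (𝓞 (CyclotomicField t ℚ))))
    (ρa ρb : 𝓞 (CyclotomicField t ℚ))
    (m : ℕ) (hm : (t : ℕ) ≤ m) (B : ℤ) (hB : B ≠ 0)
    (h0 : x + y =
      η₀ * (B : Algebra.adjoin ℤ ({ζ + ζbar} : Set (𝓞 (CyclotomicField t ℚ)))) *
        lam ^ (m - ((t : ℕ) - 1) / 2) * ρ₀ ^ (t : ℕ))
    (hha : (x : 𝓞 (CyclotomicField t ℚ)) + ζ ^ a * (y : 𝓞 (CyclotomicField t ℚ)) =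
      (1 - ζ ^ a) * (((ηa : Algebra.adjoin ℤ ({ζ + ζbar} :
        Set (𝓞 (CyclotomicField t ℚ)))) : 𝓞 (CyclotomicField t ℚ)) * ρa ^ (t : ℕ)))
    (hhb : (x : 𝓞 (CyclotomicField t ℚ)) + ζ ^ b * (y : 𝓞 (CyclotomicField t ℚ)) =
      (1 - ζ ^ b) * (((ηb : Algebra.adjoin ℤ ({ζ + ζbar} :
        Set (𝓞 (CyclotomicField t ℚ)))) : 𝓞 (CyclotomicField t ℚ)) * ρb ^ (t : ℕ)))
    (hhabar : (x : 𝓞 (CyclotomicField t ℚ)) + ζbar ^ a * (y : 𝓞 (CyclotomicField t ℚ)) =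
      (1 - ζbar ^ a) * (((ηa : Algebra.adjoin ℤ ({ζ + ζbar} :
        Set (𝓞 (CyclotomicField t ℚ)))) : 𝓞 (CyclotomicField t ℚ)) *
          (conj ρa) ^ (t : ℕ)))
    (hhbbar : (x : 𝓞 (CyclotomicField t ℚ)) + ζbar ^ b * (y : 𝓞 (CyclotomicField t ℚ)) =
      (1 - ζbar ^ b) * (((ηb : Algebra.adjoin ℤ ({ζ + ζbar} :
        Set (𝓞 (CyclotomicField t ℚ)))) : 𝓞 (CyclotomicField t ℚ)) *
          (conj ρb) ^ (t : ℕ))) :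
    ∃ η' : (Algebra.adjoin ℤ ({ζ + ζbar} : Set (𝓞 (CyclotomicField t ℚ))))ˣ,
      (((ηa * ηb⁻¹ : (Algebra.adjoin ℤ ({ζ + ζbar} :
          Set (𝓞 (CyclotomicField t ℚ))))ˣ) : Algebra.adjoin ℤ ({ζ + ζbar} :
          Set (𝓞 (CyclotomicField t ℚ)))) : 𝓞 (CyclotomicField t ℚ)) ^ 2 *
          (ρa * conj ρa) ^ (t : ℕ) + (-(ρb * conj ρb)) ^ (t : ℕ) =
        ((η' : Algebra.adjoin ℤ ({ζ + ζbar} :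
          Set (𝓞 (CyclotomicField t ℚ)))) : 𝓞 (CyclotomicField t ℚ)) *
          (B : 𝓞 (CyclotomicField t ℚ)) ^ 2 *
          (lam : 𝓞 (CyclotomicField t ℚ)) ^ (2 * m - (t : ℕ)) *
          ((ρ₀ : 𝓞 (CyclotomicField t ℚ)) ^ 2) ^ (t : ℕ) :=
  stmt_14_general t ht ht3 ζ ζbar hζ hζbar conj hconj lam hlam x y a b ha1 hat hb1 hbt hba hba' η₀
    ηa ηb ρ₀ ρa ρb m hm B h0 hha hhb hhabar hhbbar
end

section
/- Let t > 3 be a prime, ζ a primitive t-th root of unity, and λ = (1-ζ)(1-ζ̄). Suppose X, Y, Z are pairwise relatively prime nonzero rational integers, B is a nonzero integer coprime to t, and X^t + Y^t = B·Z^t with t dividing Z. Write Z = t^v·Z₁ with v ≥ 1 and t not dividing Z₁. Then there exist a unit η of ℤ[ζ+ζ̄] and an integer m ≥ t (namely m = tv(t-1)/2) such that X^t + Y^t = η·B·λ^m·Z₁^t, and X, Y, Z₁, λ are pairwise coprime in ℤ[ζ+ζ̄]. -/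
/-!
Since `t ∣ Z`, everything reduces to writing `t` as a unit of `ℤ[ζ+ζ̄]` times `λ^((t-1)/2)`.
In `ℤ[ζ]` the prime `t` is associated to `(ζ - 1)^(t-1)`, and `λ = -ζ̄ (ζ - 1)²`, so
`t = u λ^((t-1)/2)` for a unit `u` of `ℤ[ζ]`. As `t` and `λ` are fixed by complex conjugation,
so are `u` and `u⁻¹`; and since `ℤ[ζ] = ℤ[ζ+ζ̄] + ℤ[ζ+ζ̄] ζ` with conjugation sending
`a + b ζ` to `a + b ζ̄`, the conjugation-fixed elements of `ℤ[ζ]` are exactly `ℤ[ζ+ζ̄]`.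
Coprimality with `λ` then follows from `λ ∣ t`.
-/

open NumberField

section RealSubalgebra

variable {R S : Type*} [CommRing R] [CommRing S] [Algebra R S] {ζ ζbar : S}

theorem exists_add_mul_eq_of_mem_adjoin (hζbar : ζ * ζbar = 1) {x : S}
    (hx : x ∈ Algebra.adjoin R {ζ}) :
    ∃ a ∈ Algebra.adjoin R {ζ + ζbar}, ∃ b ∈ Algebra.adjoin R {ζ + ζbar}, a + b * ζ = x := by
  have hθ : ζ + ζbar ∈ Algebra.adjoin R {ζ + ζbar} := Algebra.self_mem_adjoin_singleton R _
  induction hx using Algebra.adjoin_induction with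
  | mem y hy =>
    obtain rfl := Set.mem_singleton_iff.mp hy
    exact ⟨0, zero_mem _, 1, one_mem _, by ring⟩
  | algebraMap r => exact ⟨algebraMap R S r, Subalgebra.algebraMap_mem _ r, 0, zero_mem _, by ring⟩
  | add x y _ _ ihx ihy =>
    obtain ⟨a, ha, b, hb, rfl⟩ := ihx
    obtain ⟨c, hc, d, hd, rfl⟩ := ihy
    exact ⟨a + c, add_mem ha hc, b + d, add_mem hb hd, by ring⟩
  | mul x y _ _ ihx ihy =>
    obtain ⟨a, ha, b, hb, rfl⟩ := ihx
    obtain ⟨c, hc, d, hd, rfl⟩ := ihy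
    -- `ζ ^ 2 = (ζ + ζbar) ζ - 1`
    refine ⟨a * c - b * d, sub_mem (mul_mem ha hc) (mul_mem hb hd),
      a * d + b * c + b * d * (ζ + ζbar),
      add_mem (add_mem (mul_mem ha hd) (mul_mem hb hc)) (mul_mem (mul_mem hb hd) hθ), ?_⟩
    linear_combination (b * d) * hζbar

theorem apply_eq_self_of_mem_adjoin_add (hζbar : ζ * ζbar = 1) (f : S →ₐ[R] S) (hf : f ζ = ζbar)
    {x : S} (hx : x ∈ Algebra.adjoin R {ζ + ζbar}) : f x = x := by
  have hfζbar : f ζbar = ζ := by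
    have h : f ζ * f ζbar = 1 := by rw [← map_mul, hζbar, map_one]
    exact (left_inv_eq_right_inv hζbar (hf ▸ h)).symm
  have hle : Algebra.adjoin R {ζ + ζbar} ≤ AlgHom.equalizer f (AlgHom.id R S) := by
    rw [Algebra.adjoin_le_iff, Set.singleton_subset_iff]
    change f (ζ + ζbar) = ζ + ζbar
    rw [map_add, hf, hfζbar, add_comm]
  exact hle hx

theorem mem_adjoin_add_of_apply_eq_self [IsDomain S] (hζbar : ζ * ζbar = 1) (hne : ζ ≠ ζbar)
    (htop : Algebra.adjoin R {ζ} = ⊤) (f : S →ₐ[R] S) (hf : f ζ = ζbar) {x : S} (hx : f x = x) :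
    x ∈ Algebra.adjoin R {ζ + ζbar} := by
  obtain ⟨a, ha, b, hb, rfl⟩ :=
    exists_add_mul_eq_of_mem_adjoin hζbar (htop ▸ Algebra.mem_top : x ∈ Algebra.adjoin R {ζ})
  rw [map_add, map_mul, apply_eq_self_of_mem_adjoin_add hζbar f hf ha,
    apply_eq_self_of_mem_adjoin_add hζbar f hf hb, hf] at hx
  have hb0 : b * (ζ - ζbar) = 0 := by linear_combination -hx
  rw [(mul_eq_zero.mp hb0).resolve_right (sub_ne_zero.mpr hne), zero_mul, add_zero]
  exact ha

theorem associated_of_associated_coe_adjoin_add [IsDomain S] (hζbar : ζ * ζbar = 1)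
    (hne : ζ ≠ ζbar) (htop : Algebra.adjoin R {ζ} = ⊤) (f : S →ₐ[R] S) (hf : f ζ = ζbar)
    {a b : Algebra.adjoin R {ζ + ζbar}} (ha : a ≠ 0) (h : Associated (a : S) (b : S)) :
    Associated a b := by
  obtain ⟨u, hu⟩ := h
  have hfu : f u = u := by
    refine mul_left_cancel₀ (Subtype.coe_injective.ne ha) ?_
    calc (a : S) * f u = f (a * u) := by
          rw [map_mul, apply_eq_self_of_mem_adjoin_add hζbar f hf a.2]
      _ = a * u := by rw [hu, apply_eq_self_of_mem_adjoin_add hζbar f hf b.2]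
  have hfu_inv : f ↑u⁻¹ = ↑u⁻¹ := by
    refine mul_left_cancel₀ u.ne_zero ?_
    rw [← hfu, ← map_mul, u.mul_inv, map_one, hfu, u.mul_inv]
  have hmem {x : S} (hx : f x = x) := mem_adjoin_add_of_apply_eq_self hζbar hne htop f hf hx
  exact ⟨⟨⟨u, hmem hfu⟩, ⟨↑u⁻¹, hmem hfu_inv⟩, Subtype.ext u.mul_inv, Subtype.ext u.inv_mul⟩,
    Subtype.ext hu⟩

end RealSubalgebra

section Cyclotomic

variable {K : Type*} [Field K] {ζ ζbar : 𝓞 K}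

theorem associated_natCast_one_sub_mul_one_sub_pow {p : ℕ} [Fact p.Prime] (hp : Odd p)
    (hζ : IsPrimitiveRoot ζ p) (hζbar : ζ * ζbar = 1) :
    Associated (p : 𝓞 K) (((1 - ζ) * (1 - ζbar)) ^ ((p - 1) / 2)) := by
  have hζK : IsPrimitiveRoot (ζ : K) p := hζ.map_of_injective RingOfIntegers.coe_injective
  have h := (IsCyclotomicExtension.Rat.associated_zeta_sub_one_pow_prime p hζK).symm
  have hunit : IsUnit (-ζbar) := (IsUnit.of_mul_eq_one_right ζ hζbar).neg
  have hlam : (1 - ζ) * (1 - ζbar) = (ζ - 1) ^ 2 * -ζbar := by linear_combination (ζ - 1) * hζbar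
  obtain ⟨k, rfl⟩ := hp
  rw [show 2 * k + 1 - 1 = 2 * k by omega, pow_mul] at h
  rw [show (2 * k + 1 - 1) / 2 = k by omega, hlam, mul_pow]
  exact h.trans (associated_mul_unit_right _ _ (hunit.pow _))

theorem exists_algHom_apply_eq_of_mul_eq_one [NumberField K] {n : ℕ} [NeZero n]
    [IsCyclotomicExtension {n} ℚ K] (hζ : IsPrimitiveRoot ζ n) (hζbar : ζ * ζbar = 1) :
    ∃ f : 𝓞 K →ₐ[ℤ] 𝓞 K, f ζ = ζbar := by
  let σ := (IsCyclotomicExtension.Rat.galEquivZMod n K).symm (-1)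
  refine ⟨(MulSemiringAction.toRingHom _ (𝓞 K) σ).toIntAlgHom, ?_⟩
  change σ • ζ = ζbar
  rw [IsCyclotomicExtension.Rat.galEquivZMod_smul_of_pow_eq n K σ hζ.pow_eq_one]
  refine (left_inv_eq_right_inv (?_ : _ * ζ = 1) hζbar)
  rw [← pow_succ, hζ.pow_eq_one_iff_dvd, ← ZMod.natCast_eq_zero_iff, Nat.cast_add,
    ZMod.natCast_val, ZMod.cast_id, MulEquiv.apply_symm_apply]
  simp

theorem associated_natCast_pow_adjoin_add [NumberField K] {p : ℕ} [Fact p.Prime] (hp : Odd p)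
    [IsCyclotomicExtension {p} ℚ K] (hζ : IsPrimitiveRoot ζ p) (hζbar : ζ * ζbar = 1)
    (lam : Algebra.adjoin ℤ {ζ + ζbar}) (hlam : (lam : 𝓞 K) = (1 - ζ) * (1 - ζbar)) :
    Associated (p : Algebra.adjoin ℤ {ζ + ζbar}) (lam ^ ((p - 1) / 2)) := by
  have hne : ζ ≠ ζbar := by
    rintro rfl
    have h2 := Nat.le_of_dvd two_pos (hζ.dvd_of_pow_eq_one 2 (by rwa [sq]))
    have := (Fact.out : p.Prime).two_le
    obtain ⟨k, rfl⟩ := hp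
    omega
  obtain ⟨f, hf⟩ := exists_algHom_apply_eq_of_mul_eq_one hζ hζbar
  refine associated_of_associated_coe_adjoin_add hζbar hne
    (IsCyclotomicExtension.Rat.adjoin_singleton_eq_top
      (hζ.map_of_injective RingOfIntegers.coe_injective)) f hf ?_ ?_
  · exact_mod_cast (Fact.out : p.Prime).ne_zero
  · push_cast [hlam]
    exact associated_natCast_one_sub_mul_one_sub_pow hp hζ hζbar

end Cyclotomic

theorem stmt_15_general (t : ℕ+) (ht : (t : ℕ).Prime) (ht3 : 3 < (t : ℕ))
    (ζ ζbar : 𝓞 (CyclotomicField t ℚ)) (hζ : IsPrimitiveRoot ζ (t : ℕ))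
    (hζbar : ζ * ζbar = 1)
    (lam : Algebra.adjoin ℤ ({ζ + ζbar} : Set (𝓞 (CyclotomicField t ℚ))))
    (hlam : (lam : 𝓞 (CyclotomicField t ℚ)) = (1 - ζ) * (1 - ζbar))
    (X Y Z : ℤ)
    (hXY : IsCoprime X Y) (hYZ : IsCoprime Y Z) (hXZ : IsCoprime X Z)
    (B : ℤ)
    (heq : X ^ (t : ℕ) + Y ^ (t : ℕ) = B * Z ^ (t : ℕ))
    (htZ : ((t : ℕ) : ℤ) ∣ Z)
    (v : ℕ) (hv : 1 ≤ v) (Z₁ : ℤ) (hZfact : Z = ((t : ℕ) : ℤ) ^ v * Z₁)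
    (hZ₁ : ¬ ((t : ℕ) : ℤ) ∣ Z₁) :
    ∃ (η : (Algebra.adjoin ℤ ({ζ + ζbar} : Set (𝓞 (CyclotomicField t ℚ))))ˣ)
      (m : ℕ), (t : ℕ) ≤ m ∧ m = (t : ℕ) * v * (((t : ℕ) - 1) / 2) ∧
      (X : Algebra.adjoin ℤ ({ζ + ζbar} : Set (𝓞 (CyclotomicField t ℚ)))) ^ (t : ℕ) +
          (Y : Algebra.adjoin ℤ ({ζ + ζbar} : Set (𝓞 (CyclotomicField t ℚ)))) ^ (t : ℕ) =
        η * (B : Algebra.adjoin ℤ ({ζ + ζbar} : Set (𝓞 (CyclotomicField t ℚ)))) *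
          lam ^ m *
          (Z₁ : Algebra.adjoin ℤ ({ζ + ζbar} : Set (𝓞 (CyclotomicField t ℚ)))) ^ (t : ℕ) ∧
      IsCoprime (X : Algebra.adjoin ℤ ({ζ + ζbar} : Set (𝓞 (CyclotomicField t ℚ))))
        (Y : Algebra.adjoin ℤ ({ζ + ζbar} : Set (𝓞 (CyclotomicField t ℚ)))) ∧
      IsCoprime (X : Algebra.adjoin ℤ ({ζ + ζbar} : Set (𝓞 (CyclotomicField t ℚ))))
        (Z₁ : Algebra.adjoin ℤ ({ζ + ζbar} : Set (𝓞 (CyclotomicField t ℚ)))) ∧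
      IsCoprime (X : Algebra.adjoin ℤ ({ζ + ζbar} : Set (𝓞 (CyclotomicField t ℚ)))) lam ∧
      IsCoprime (Y : Algebra.adjoin ℤ ({ζ + ζbar} : Set (𝓞 (CyclotomicField t ℚ))))
        (Z₁ : Algebra.adjoin ℤ ({ζ + ζbar} : Set (𝓞 (CyclotomicField t ℚ)))) ∧
      IsCoprime (Y : Algebra.adjoin ℤ ({ζ + ζbar} : Set (𝓞 (CyclotomicField t ℚ)))) lam ∧
      IsCoprime (Z₁ : Algebra.adjoin ℤ ({ζ + ζbar} : Set (𝓞 (CyclotomicField t ℚ)))) lam := by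
  have : Fact (t : ℕ).Prime := ⟨ht⟩
  -- instance search misses this: it only sees `CyclotomicField`'s own `ℚ`-algebra structure,
  -- not `DivisionRing.toRatAlgebra`, with which it agrees only up to unfolding
  have : IsCyclotomicExtension {(t : ℕ)} ℚ (CyclotomicField t ℚ) :=
    CyclotomicField.isCyclotomicExtension _ _
  set k := ((t : ℕ) - 1) / 2
  have hk : 1 ≤ k := by omega
  have hassoc : Associated ((t : ℕ) : Algebra.adjoin ℤ {ζ + ζbar}) (lam ^ k) :=
    associated_natCast_pow_adjoin_add (ht.odd_of_ne_two (by omega)) hζ hζbar lam hlam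
  obtain ⟨u, hu⟩ := hassoc.pow_pow (n := (t : ℕ) * v)
  have hcoprime_lam {a : ℤ} (h : IsCoprime a ((t : ℕ) : ℤ)) :
      IsCoprime (a : Algebra.adjoin ℤ {ζ + ζbar}) lam :=
    (h.intCast (R := Algebra.adjoin ℤ {ζ + ζbar})).of_isCoprime_of_dvd_right
      ((dvd_pow_self lam (by omega : k ≠ 0)).trans hassoc.symm.dvd)
  have hZ₁Z : Z₁ ∣ Z := Dvd.intro_left _ hZfact.symm
  have hZ₁t : IsCoprime Z₁ ((t : ℕ) : ℤ) :=
    ((Nat.prime_iff_prime_int.mp ht).coprime_iff_not_dvd.mpr hZ₁).symm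
  refine ⟨u⁻¹, (t : ℕ) * v * k, ?_, rfl, ?_, hXY.intCast,
    (hXZ.of_isCoprime_of_dvd_right hZ₁Z).intCast, hcoprime_lam (hXZ.of_isCoprime_of_dvd_right htZ),
    (hYZ.of_isCoprime_of_dvd_right hZ₁Z).intCast, hcoprime_lam (hYZ.of_isCoprime_of_dvd_right htZ),
    hcoprime_lam hZ₁t⟩
  · rw [mul_assoc]
    exact Nat.le_mul_of_pos_right _ (Nat.mul_pos hv hk)
  · have hcast := congrArg (Int.cast (R := Algebra.adjoin ℤ {ζ + ζbar})) (hZfact ▸ heq)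
    push_cast at hcast
    rw [hcast, show (t : ℕ) * v * k = k * ((t : ℕ) * v) by ring, pow_mul lam, ← hu]
    linear_combination
      -(B * ((t : ℕ) : Algebra.adjoin ℤ {ζ + ζbar}) ^ ((t : ℕ) * v) * Z₁ ^ (t : ℕ)) * u.inv_mul

/-- Let `t > 3` be a prime, `ζ ∈ ℤ[ζ]` (the ring of integers of
`ℚ(ζ_t)`) a primitive `t`-th root of unity, `ζbar = ζ⁻¹`, `λ = (1-ζ)(1-ζbar)`.  Suppose
`X, Y, Z` are pairwise coprime nonzero integers, `B` a nonzero integer coprime to `t`,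
`X^t + Y^t = B·Z^t` with `t ∣ Z`, and write `Z = t^v·Z₁` with `v ≥ 1` and `t ∤ Z₁`.
Then there are a unit `η` of `ℤ[ζ+ζbar]` and an integer `m ≥ t`
(namely `m = tv(t-1)/2`) such that `X^t + Y^t = η·B·λ^m·Z₁^t` and `X, Y, Z₁, λ` are
pairwise coprime in `ℤ[ζ+ζbar]`. -/
theorem stmt_15 (t : ℕ+) (ht : (t : ℕ).Prime) (ht3 : 3 < (t : ℕ))
    (ζ ζbar : 𝓞 (CyclotomicField t ℚ)) (hζ : IsPrimitiveRoot ζ (t : ℕ))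
    (hζbar : ζ * ζbar = 1)
    (lam : Algebra.adjoin ℤ ({ζ + ζbar} : Set (𝓞 (CyclotomicField t ℚ))))
    (hlam : (lam : 𝓞 (CyclotomicField t ℚ)) = (1 - ζ) * (1 - ζbar))
    (X Y Z : ℤ) (hX : X ≠ 0) (hY : Y ≠ 0) (hZ : Z ≠ 0)
    (hXY : IsCoprime X Y) (hYZ : IsCoprime Y Z) (hXZ : IsCoprime X Z)
    (B : ℤ) (hB : B ≠ 0) (hBt : IsCoprime B ((t : ℕ) : ℤ))
    (heq : X ^ (t : ℕ) + Y ^ (t : ℕ) = B * Z ^ (t : ℕ))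
    (htZ : ((t : ℕ) : ℤ) ∣ Z)
    (v : ℕ) (hv : 1 ≤ v) (Z₁ : ℤ) (hZfact : Z = ((t : ℕ) : ℤ) ^ v * Z₁)
    (hZ₁ : ¬ ((t : ℕ) : ℤ) ∣ Z₁) :
    ∃ (η : (Algebra.adjoin ℤ ({ζ + ζbar} : Set (𝓞 (CyclotomicField t ℚ))))ˣ)
      (m : ℕ), (t : ℕ) ≤ m ∧ m = (t : ℕ) * v * (((t : ℕ) - 1) / 2) ∧
      (X : Algebra.adjoin ℤ ({ζ + ζbar} : Set (𝓞 (CyclotomicField t ℚ)))) ^ (t : ℕ) +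
          (Y : Algebra.adjoin ℤ ({ζ + ζbar} : Set (𝓞 (CyclotomicField t ℚ)))) ^ (t : ℕ) =
        η * (B : Algebra.adjoin ℤ ({ζ + ζbar} : Set (𝓞 (CyclotomicField t ℚ)))) *
          lam ^ m *
          (Z₁ : Algebra.adjoin ℤ ({ζ + ζbar} : Set (𝓞 (CyclotomicField t ℚ)))) ^ (t : ℕ) ∧
      IsCoprime (X : Algebra.adjoin ℤ ({ζ + ζbar} : Set (𝓞 (CyclotomicField t ℚ))))
        (Y : Algebra.adjoin ℤ ({ζ + ζbar} : Set (𝓞 (CyclotomicField t ℚ)))) ∧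
      IsCoprime (X : Algebra.adjoin ℤ ({ζ + ζbar} : Set (𝓞 (CyclotomicField t ℚ))))
        (Z₁ : Algebra.adjoin ℤ ({ζ + ζbar} : Set (𝓞 (CyclotomicField t ℚ)))) ∧
      IsCoprime (X : Algebra.adjoin ℤ ({ζ + ζbar} : Set (𝓞 (CyclotomicField t ℚ)))) lam ∧
      IsCoprime (Y : Algebra.adjoin ℤ ({ζ + ζbar} : Set (𝓞 (CyclotomicField t ℚ))))
        (Z₁ : Algebra.adjoin ℤ ({ζ + ζbar} : Set (𝓞 (CyclotomicField t ℚ)))) ∧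
      IsCoprime (Y : Algebra.adjoin ℤ ({ζ + ζbar} : Set (𝓞 (CyclotomicField t ℚ)))) lam ∧
      IsCoprime (Z₁ : Algebra.adjoin ℤ ({ζ + ζbar} : Set (𝓞 (CyclotomicField t ℚ)))) lam :=
  stmt_15_general t ht ht3 ζ ζbar hζ hζbar lam hlam X Y Z hXY hYZ hXZ B heq htZ v hv Z₁ hZfact hZ₁
end
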